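/- arXiv:2502.19542 — 2 statements merged into one kernel-verified Lean document; each statement's English description precedes it below -/
import Mathlib

section
/- Let S ⊆ ℤ × ℤ, let p_1, p_2 ∈ ℕ, and let i, j ∈ S with |i_k − j_k| ≤ p_k + 1 for k = 1,2. Suppose S is axis-filling on the interaction box intersection B(i,j), and suppose there exists a chain in S between i and j all of whose points lie in B(i,j). Then there exists a shortest chain in S between i and j. -/
/-- The ℓ¹-norm on ℤ × ℤ. -/
def lnorm (x : ℤ × ℤ) : ℤ := |x.1| + |x.2|

/-- The `k`-th coordinate of a point of ℤ × ℤ, for `k : Fin 2`. -/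
def coord2 (x : ℤ × ℤ) : Fin 2 → ℤ := ![x.1, x.2]

/-- The `k`-th standard basis vector of ℤ × ℤ. -/
def deltaV : Fin 2 → ℤ × ℤ := ![(1, 0), (0, 1)]

/-- `t 0, t 1, …, t r` is a chain in `S` between `i` and `j`:
all points are in `S`, the endpoints are `i` and `j`, and consecutive points
are at ℓ¹-distance 1. `r` is the length of the chain. -/
def ChainIn (S : Set (ℤ × ℤ)) (t : ℕ → ℤ × ℤ) (r : ℕ) (i j : ℤ × ℤ) : Prop :=
  t 0 = i ∧ t r = j ∧ (∀ l, l ≤ r → t l ∈ S) ∧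
    ∀ l, 1 ≤ l → l ≤ r → lnorm (t l - t (l - 1)) = 1

/-- A shortest chain: a chain whose length equals `‖j - i‖₁`. -/
def ShortestChainIn (S : Set (ℤ × ℤ)) (t : ℕ → ℤ × ℤ) (r : ℕ) (i j : ℤ × ℤ) : Prop :=
  ChainIn S t r i j ∧ (r : ℤ) = lnorm (j - i)

/-- A direction-`k` chain between `i` and `j` exists in `S`: every lattice point
agreeing with `i` off direction `k` and with `k`-th coordinate strictly between
those of `i` and `j` belongs to `S`. -/
def DirChainExists (S : Set (ℤ × ℤ)) (k : Fin 2) (i j : ℤ × ℤ) : Prop :=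
  ∀ r : ℤ × ℤ, (∀ k' : Fin 2, k' ≠ k → coord2 r k' = coord2 i k') →
    min (coord2 i k) (coord2 j k) < coord2 r k →
    coord2 r k < max (coord2 i k) (coord2 j k) → r ∈ S

/-- `i` is resolved in direction `k` if both `i + δ_k` and `i - δ_k` belong to `S`. -/
def Resolved (S : Set (ℤ × ℤ)) (k : Fin 2) (i : ℤ × ℤ) : Prop :=
  i + deltaV k ∈ S ∧ i - deltaV k ∈ S

/-- `t` lies on the axis-parallel segment (in direction `k`) from `i` to `j`. -/
def OnSegment (k : Fin 2) (i j t : ℤ × ℤ) : Prop :=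
  (∀ k' : Fin 2, k' ≠ k → coord2 t k' = coord2 i k') ∧
    min (coord2 i k) (coord2 j k) ≤ coord2 t k ∧
    coord2 t k ≤ max (coord2 i k) (coord2 j k)

/-- There is an L-chain in `S` between `i` and `j` with corner element `c`:
a direction-`k₁` chain between `i` and `c` followed by a direction-`k₂` chain
between `c` and `j`, with `k₁ ≠ k₂`. -/
def IsLChain (S : Set (ℤ × ℤ)) (i c j : ℤ × ℤ) (k₁ k₂ : Fin 2) : Prop :=
  k₁ ≠ k₂ ∧ i ∈ S ∧ c ∈ S ∧ j ∈ S ∧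
    (∀ k' : Fin 2, k' ≠ k₁ → coord2 i k' = coord2 c k') ∧ DirChainExists S k₁ i c ∧
    (∀ k' : Fin 2, k' ≠ k₂ → coord2 c k' = coord2 j k') ∧ DirChainExists S k₂ c j

/-- `t` is an element of the L-chain between `i` and `j` with corner `c`. -/
def InLChain (i c j : ℤ × ℤ) (k₁ k₂ : Fin 2) (t : ℤ × ℤ) : Prop :=
  OnSegment k₁ i c t ∨ OnSegment k₂ c j t

/-- The interaction box intersection `B(i,j)` for degrees `p₁, p₂`. -/
def interBox (p₁ p₂ : ℕ) (i j : ℤ × ℤ) : Set (ℤ × ℤ) :=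
  {r | |i.1 - r.1| ≤ (p₁ : ℤ) + 1 ∧ |i.2 - r.2| ≤ (p₂ : ℤ) + 1 ∧
       |j.1 - r.1| ≤ (p₁ : ℤ) + 1 ∧ |j.2 - r.2| ≤ (p₂ : ℤ) + 1}

/-- `S` is axis-filling on `A`: whenever `l, t ∈ S ∩ A` agree in some coordinate `k`,
every lattice point with the same `k`-th coordinate and with the other coordinate
strictly between those of `l` and `t` belongs to `S`. -/
def AxisFilling (S A : Set (ℤ × ℤ)) : Prop :=
  ∀ l t : ℤ × ℤ, l ∈ S → l ∈ A → t ∈ S → t ∈ A →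
    ∀ k : Fin 2, coord2 l k = coord2 t k →
      ∀ r : ℤ × ℤ, coord2 r k = coord2 l k →
        (∀ k' : Fin 2, k' ≠ k → min (coord2 l k') (coord2 t k') < coord2 r k' ∧
          coord2 r k' < max (coord2 l k') (coord2 t k')) → r ∈ S

/-!
Because `B(i,j)` is a rectangle, axis-filling makes `T = S ∩ B(i,j)` orthoconvex: two points of `T`
on a common row or column are joined inside `T` by the segment between them.

Call a chain a staircase if each of its steps moves towards its endpoint `b`; staircases are
exactly the shortest chains. In an orthoconvex `T`, if a staircase runs from `c` to `b`, then so
does one from every point `a ∈ T` of the rectangle spanned by `c` and `b`: the staircase from `c`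
meets the row or the column of `a` at a point of the rectangle spanned by `a` and `b`, and `a`
walks there along that row or column. Consequently a staircase to `b` can be prolonged backwards
by any step inside `T`, either directly (if the step moves towards `b`) or by the rectangle
property (if it moves away). Induction along the given chain then turns it into a staircase.
-/

/-- In the ℓ¹-norm, `x` lies between `a` and `b` iff it lies in the rectangle they span. -/
def L1Between (a x b : ℤ × ℤ) : Prop :=
  lnorm (x - a) + lnorm (b - x) = lnorm (b - a)

def OrthoConvex (T : Set (ℤ × ℤ)) : Prop :=
  ∀ a ∈ T, ∀ b ∈ T, (a.1 = b.1 ∨ a.2 = b.2) → ∀ x, L1Between a x b → x ∈ T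

inductive Staircase (T : Set (ℤ × ℤ)) : ℤ × ℤ → ℤ × ℤ → Prop
  | refl {a : ℤ × ℤ} : a ∈ T → Staircase T a a
  | cons {a a' b : ℤ × ℤ} : a ∈ T → lnorm (a' - a) = 1 → L1Between a a' b →
      Staircase T a' b → Staircase T a b

lemma lnorm_nonneg (x : ℤ × ℤ) : 0 ≤ lnorm x := by
  unfold lnorm
  positivity

lemma abs_coord2_sub_le (x y : ℤ × ℤ) (k : Fin 2) :
    |coord2 x k - coord2 y k| ≤ lnorm (x - y) := by
  simp only [lnorm, Prod.fst_sub, Prod.snd_sub]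
  fin_cases k
  · exact le_add_of_nonneg_right (abs_nonneg _)
  · exact le_add_of_nonneg_left (abs_nonneg _)

lemma abs_sub_add_abs_sub_eq_iff {a x b : ℤ} :
    |x - a| + |b - x| = |b - a| ↔ min a b ≤ x ∧ x ≤ max a b := by
  simp only [abs_eq_max_neg]
  omega

lemma l1Between_iff {a x b : ℤ × ℤ} : L1Between a x b ↔
    (min a.1 b.1 ≤ x.1 ∧ x.1 ≤ max a.1 b.1) ∧ (min a.2 b.2 ≤ x.2 ∧ x.2 ≤ max a.2 b.2) := by
  rw [← abs_sub_add_abs_sub_eq_iff, ← abs_sub_add_abs_sub_eq_iff]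
  have h₁ := abs_sub_le b.1 x.1 a.1
  have h₂ := abs_sub_le b.2 x.2 a.2
  simp only [L1Between, lnorm, Prod.fst_sub, Prod.snd_sub]
  omega

namespace L1Between

lemma left (a b : ℤ × ℤ) : L1Between a a b := by
  simp [L1Between, lnorm]

lemma trans_right {a a' x b : ℤ × ℤ} (h : L1Between a a' b) (h' : L1Between a' x b) :
    L1Between a x b := by
  rw [l1Between_iff] at *
  omega

lemma trans_left {a x q b : ℤ × ℤ} (h : L1Between a q b) (h' : L1Between a x q) :
    L1Between a x b := by
  rw [l1Between_iff] at *
  omega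

lemma trans_left_right {a x q b : ℤ × ℤ} (h : L1Between a q b) (h' : L1Between a x q) :
    L1Between x q b := by
  rw [l1Between_iff] at *
  omega

lemma coord2_mem {a x b : ℤ × ℤ} (h : L1Between a x b) (k : Fin 2) :
    min (coord2 a k) (coord2 b k) ≤ coord2 x k ∧ coord2 x k ≤ max (coord2 a k) (coord2 b k) := by
  rw [l1Between_iff] at h
  fin_cases k
  exacts [h.1, h.2]

end L1Between

lemma exists_adjacent_l1Between {a q : ℤ × ℤ} (h : a ≠ q) :
    ∃ a₁, lnorm (a₁ - a) = 1 ∧ L1Between a a₁ q := by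
  simp only [l1Between_iff, lnorm, Prod.fst_sub, Prod.snd_sub, abs_eq_max_neg]
  rw [Ne, Prod.ext_iff, not_and_or] at h
  rcases lt_trichotomy a.1 q.1 with h₁ | h₁ | h₁
  · exact ⟨(a.1 + 1, a.2), by omega⟩
  · rcases lt_or_gt_of_ne (h.resolve_left (not_not.2 h₁)) with h₂ | h₂
    · exact ⟨(a.1, a.2 + 1), by omega⟩
    · exact ⟨(a.1, a.2 - 1), by omega⟩
  · exact ⟨(a.1 - 1, a.2), by omega⟩

lemma orthoConvex_interBox (p₁ p₂ : ℕ) (i j : ℤ × ℤ) : OrthoConvex (interBox p₁ p₂ i j) := by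
  intro a ha b hb _ x hx
  simp only [interBox, Set.mem_ofPred_eq, abs_le, l1Between_iff] at *
  omega

lemma AxisFilling.orthoConvex_inter {S A : Set (ℤ × ℤ)} (hS : AxisFilling S A)
    (hA : OrthoConvex A) : OrthoConvex (S ∩ A) := by
  intro a ha b hb hab x hx
  refine ⟨?_, hA a ha.2 b hb.2 hab x hx⟩
  by_cases hxa : x = a
  · exact hxa ▸ ha.1
  by_cases hxb : x = b
  · exact hxb ▸ hb.1
  rw [l1Between_iff] at hx
  rw [Prod.ext_iff] at hxa hxb
  rcases hab with hab | hab
  · refine hS a b ha.1 ha.2 hb.1 hb.2 0 (by simpa [coord2]) x (by simp [coord2]; omega) ?_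
    intro k hk
    fin_cases k
    · exact absurd rfl hk
    · simp [coord2]; omega
  · refine hS a b ha.1 ha.2 hb.1 hb.2 1 (by simpa [coord2]) x (by simp [coord2]; omega) ?_
    intro k hk
    fin_cases k
    · simp [coord2]; omega
    · exact absurd rfl hk

namespace Staircase

variable {T : Set (ℤ × ℤ)}

lemma mem_left {a b : ℤ × ℤ} (h : Staircase T a b) : a ∈ T := by
  cases h <;> assumption

lemma exists_coord2_eq {c b : ℤ × ℤ} (h : Staircase T c b) (k : Fin 2) {y : ℤ}
    (hy₁ : min (coord2 c k) (coord2 b k) ≤ y) (hy₂ : y ≤ max (coord2 c k) (coord2 b k)) :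
    ∃ p, coord2 p k = y ∧ L1Between c p b ∧ Staircase T p b := by
  induction h with
  | @refl b hb => exact ⟨b, by omega, .left b b, refl hb⟩
  | @cons a a' b ha hstep hbet hs ih =>
    by_cases hya : coord2 a k = y
    · exact ⟨a, hya, .left a b, cons ha hstep hbet hs⟩
    have hy' : min (coord2 a' k) (coord2 b k) ≤ y ∧ y ≤ max (coord2 a' k) (coord2 b k) := by
      have := hbet.coord2_mem k
      have := abs_le.1 (abs_coord2_sub_le a' a k)
      omega
    obtain ⟨p, hpy, hbet', hp⟩ := ih hy'.1 hy'.2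
    exact ⟨p, hpy, hbet.trans_right hbet', hp⟩

lemma exists_shortestChainIn {a b : ℤ × ℤ} (h : Staircase T a b) :
    ∃ (t : ℕ → ℤ × ℤ) (r : ℕ), ShortestChainIn T t r a b := by
  induction h with
  | @refl a ha => exact ⟨fun _ => a, 0, ⟨rfl, rfl, fun _ _ => ha, by omega⟩, by simp [lnorm]⟩
  | @cons a a' b ha hstep hbet _ ih =>
    obtain ⟨t, r, ⟨h0, hr, hmem, hsteps⟩, hlen⟩ := ih
    refine ⟨fun n => if n = 0 then a else t (n - 1), r + 1, ⟨rfl, by simpa using hr, ?_, ?_⟩, ?_⟩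
    · intro l hl
      dsimp only
      split_ifs
      exacts [ha, hmem _ (by omega)]
    · intro l hl hl'
      obtain rfl | hl := eq_or_lt_of_le hl
      · simpa [h0] using hstep
      · simpa [show l ≠ 0 by omega, show l - 1 ≠ 0 by omega, show l - 1 - 1 = l - 2 by omega]
          using hsteps (l - 1) (by omega) (by omega)
    · unfold L1Between at hbet
      push_cast
      omega

end Staircase

namespace OrthoConvex

variable {T : Set (ℤ × ℤ)}

lemma staircase_of_aligned (hT : OrthoConvex T) {a q b : ℤ × ℤ} (ha : a ∈ T)
    (hq : Staircase T q b) (haq : a.1 = q.1 ∨ a.2 = q.2) (hbet : L1Between a q b) :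
    Staircase T a b := by
  obtain ⟨n, hn⟩ : ∃ n : ℕ, lnorm (q - a) = n :=
    ⟨_, (Int.toNat_of_nonneg (lnorm_nonneg _)).symm⟩
  induction n generalizing a with
  | zero =>
    obtain rfl : a = q := by
      simp only [lnorm, Prod.fst_sub, Prod.snd_sub, abs_eq_max_neg, Prod.ext_iff] at hn ⊢
      omega
    exact hq
  | succ n ih =>
    obtain ⟨a₁, hstep, hbet₁⟩ := exists_adjacent_l1Between (a := a) (q := q) <| by
      rintro rfl
      simp [lnorm] at hn
      omega
    have ha₁ : a₁ ∈ T := hT a ha q hq.mem_left haq a₁ hbet₁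
    refine .cons ha hstep (hbet.trans_left hbet₁) (ih ha₁ ?_ (hbet.trans_left_right hbet₁) ?_)
    · rw [l1Between_iff] at hbet₁
      omega
    · unfold L1Between at hbet₁
      omega

lemma staircase_of_l1Between (hT : OrthoConvex T) {a c b : ℤ × ℤ} (hc : Staircase T c b)
    (ha : a ∈ T) (hbet : L1Between c a b) : Staircase T a b := by
  have hbet₂ := hbet.coord2_mem 1
  obtain ⟨p, hp₂, hcp, hp⟩ := hc.exists_coord2_eq 1 hbet₂.1 hbet₂.2
  simp only [coord2, Matrix.cons_val_one, Matrix.cons_val_fin_one] at hp₂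
  rw [l1Between_iff] at hbet hcp
  by_cases hap : min a.1 b.1 ≤ p.1 ∧ p.1 ≤ max a.1 b.1
  · exact hT.staircase_of_aligned ha hp (.inr hp₂.symm) (l1Between_iff.2 (by omega))
  -- otherwise `a` lies in the rectangle spanned by `p` and `b`, so the column of `a` is met later
  obtain ⟨q, hq₁, hpq, hq⟩ := hp.exists_coord2_eq 0 (y := a.1) (by simp [coord2]; omega)
    (by simp [coord2]; omega)
  simp only [coord2, Matrix.cons_val_zero] at hq₁
  rw [l1Between_iff] at hpq
  exact hT.staircase_of_aligned ha hq (.inl hq₁.symm) (l1Between_iff.2 (by omega))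

lemma staircase_cons (hT : OrthoConvex T) {a a' b : ℤ × ℤ} (ha : a ∈ T)
    (hstep : lnorm (a' - a) = 1) (h : Staircase T a' b) : Staircase T a b := by
  by_cases hbet : L1Between a a' b
  · exact .cons ha hstep hbet h
  refine hT.staircase_of_l1Between h ha ?_
  rw [l1Between_iff] at hbet ⊢
  simp only [lnorm, Prod.fst_sub, Prod.snd_sub, abs_eq_max_neg] at hstep
  omega

lemma staircase_of_chainIn (hT : OrthoConvex T) {t : ℕ → ℤ × ℤ} {r : ℕ} {a b : ℤ × ℤ}
    (h : ChainIn T t r a b) : Staircase T a b := by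
  induction r generalizing t a with
  | zero =>
    obtain ⟨h0, hr, hmem, -⟩ := h
    exact h0 ▸ hr ▸ .refl (hmem 0 le_rfl)
  | succ r ih =>
    obtain ⟨h0, hr, hmem, hstep⟩ := h
    have htail : ChainIn T (fun n => t (n + 1)) r (t 1) b :=
      ⟨rfl, hr, fun l hl => hmem (l + 1) (by omega), fun l hl hl' => by
        simpa [Nat.sub_add_cancel hl] using hstep (l + 1) (by omega) (by omega)⟩
    exact h0 ▸ hT.staircase_cons (hmem 0 (Nat.zero_le _)) (hstep 1 le_rfl (by omega)) (ih htail)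

end OrthoConvex

lemma ChainIn.mono {S S' : Set (ℤ × ℤ)} (hSS' : S ⊆ S') {t : ℕ → ℤ × ℤ} {r : ℕ}
    {a b : ℤ × ℤ} (h : ChainIn S t r a b) : ChainIn S' t r a b :=
  ⟨h.1, h.2.1, fun l hl => hSS' (h.2.2.1 l hl), h.2.2.2⟩

theorem exists_shortest_of_chain_in_box_general (S : Set (ℤ × ℤ)) (p₁ p₂ : ℕ) (i j : ℤ × ℤ)
    (haf : AxisFilling S (interBox p₁ p₂ i j))
    (hch : ∃ (t : ℕ → ℤ × ℤ) (r : ℕ), ChainIn S t r i j ∧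
      ∀ l, l ≤ r → t l ∈ interBox p₁ p₂ i j) :
    ∃ (t : ℕ → ℤ × ℤ) (r : ℕ), ShortestChainIn S t r i j := by
  obtain ⟨t, r, ⟨h0, hr, hmem, hstep⟩, hbox⟩ := hch
  have hT := haf.orthoConvex_inter (orthoConvex_interBox p₁ p₂ i j)
  have hchain : ChainIn (S ∩ interBox p₁ p₂ i j) t r i j :=
    ⟨h0, hr, fun l hl => ⟨hmem l hl, hbox l hl⟩, hstep⟩
  obtain ⟨t', r', hshort, hlen⟩ := (hT.staircase_of_chainIn hchain).exists_shortestChainIn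
  exact ⟨t', r', hshort.mono Set.inter_subset_left, hlen⟩

/-- If `|i_k - j_k| ≤ p_k + 1` for `k = 1, 2`, `S` is axis-filling on
the interaction box intersection `B(i,j)`, and there is a chain in `S` between
`i` and `j` lying in `B(i,j)`, then there exists a shortest chain in `S`
between `i` and `j`. -/
theorem exists_shortest_of_chain_in_box (S : Set (ℤ × ℤ)) (p₁ p₂ : ℕ) (i j : ℤ × ℤ)
    (hi : i ∈ S) (hj : j ∈ S)
    (h1 : |i.1 - j.1| ≤ (p₁ : ℤ) + 1) (h2 : |i.2 - j.2| ≤ (p₂ : ℤ) + 1)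
    (haf : AxisFilling S (interBox p₁ p₂ i j))
    (hch : ∃ (t : ℕ → ℤ × ℤ) (r : ℕ), ChainIn S t r i j ∧
      ∀ l, l ≤ r → t l ∈ interBox p₁ p₂ i j) :
    ∃ (t : ℕ → ℤ × ℤ) (r : ℕ), ShortestChainIn S t r i j :=
  exists_shortest_of_chain_in_box_general S p₁ p₂ i j haf hch
end

section
/- Let S ⊆ ℤ × ℤ and p_1, p_2 ∈ ℕ. Let C_{i,j} be an L-chain in S between i and j (with some corner element), let t be an element of C_{i,j}, and let C_{l,t} be an L-chain in S between l and t (with some corner element). Let p be an element of C_{i,j} and p' an element of C_{l,t} such that |p_k − p'_k| ≤ p_k + 1, |p_k − t_k| ≤ p_k + 1, and |p'_k − t_k| ≤ p_k + 1 for k = 1,2, and suppose S is axis-filling on the interaction box intersection B(p,p'). Then there exists a shortest chain in S between p and p'. -/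
/-!
For the product order on `ℤ × ℤ`, `[[a, b]]` is the rectangle spanned by `a` and `b`, and a
segment when `a` and `b` share a coordinate. A shortest chain is the same as a monotone lattice
path, so every rectangle contained in `S` joins its corners by one, and monotone paths can be
concatenated through any point of the rectangle spanned by their ends.

The point `q` is joined to `t` by an L-shaped path in `S` (a piece of `C_{i,j}`), and so is `q'`
(a piece of `C_{l,t}`); all of this lies in `B(q,q')`, where `S` is convex along rows and columns.
If `t` lies in the rectangle spanned by `q` and `q'`, the two L-paths compose to a monotone path.
Otherwise, up to exchanging `q, q'` and the two coordinates, `q'.1` lies between `q.1` and `t.1`,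
so the L-path from `q` to `t` crosses the column of `q'`. Filling that column, and if necessary
one more row or column, yields a monotone staircase from `q` to `q'` with at most three legs.
-/

open Set
open scoped Interval

def JoinedByShortestChain (S : Set (ℤ × ℤ)) (a b : ℤ × ℤ) : Prop :=
  ∃ (ch : ℕ → ℤ × ℤ) (r : ℕ), ShortestChainIn S ch r a b

lemma mem_uIcc_prod {a b r : ℤ × ℤ} : r ∈ [[a, b]] ↔ r.1 ∈ [[a.1, b.1]] ∧ r.2 ∈ [[a.2, b.2]] := by
  rw [uIcc_prod_eq, mem_prod]

lemma lnorm_sub_comm (a b : ℤ × ℤ) : lnorm (a - b) = lnorm (b - a) := by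
  simp only [lnorm, Prod.fst_sub, Prod.snd_sub, abs_sub_comm]

lemma lnorm_sub_add_lnorm_sub_of_mem_uIcc {a b c : ℤ × ℤ} (hb : b ∈ [[a, c]]) :
    lnorm (b - a) + lnorm (c - b) = lnorm (c - a) := by
  simp only [mem_uIcc_prod, mem_uIcc] at hb
  simp only [lnorm, Prod.fst_sub, Prod.snd_sub, abs_eq_max_neg]
  omega

lemma exists_step_mem_uIcc {a b : ℤ × ℤ} (hab : a ≠ b) :
    ∃ a' ∈ [[a, b]], lnorm (a' - a) = 1 ∧ lnorm (b - a') + 1 = lnorm (b - a) := by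
  simp only [mem_uIcc_prod, mem_uIcc, lnorm, Prod.fst_sub, Prod.snd_sub, abs_eq_max_neg]
  rcases lt_trichotomy a.1 b.1 with h | h | h
  · exact ⟨(a.1 + 1, a.2), by simp only; omega⟩
  · rcases lt_trichotomy a.2 b.2 with h' | h' | h'
    · exact ⟨(a.1, a.2 + 1), by simp only; omega⟩
    · exact absurd (Prod.ext h h') hab
    · exact ⟨(a.1, a.2 - 1), by simp only; omega⟩
  · exact ⟨(a.1 - 1, a.2), by simp only; omega⟩

namespace JoinedByShortestChain

variable {S : Set (ℤ × ℤ)} {a b c : ℤ × ℤ}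

lemma of_lnorm_sub_eq_one (ha : a ∈ S) (hb : b ∈ S) (hab : lnorm (b - a) = 1) :
    JoinedByShortestChain S a b := by
  refine ⟨fun n => if n = 0 then a else b, 1, ⟨rfl, rfl, ?_, ?_⟩, hab.symm⟩
  · intro l _
    dsimp only
    split_ifs <;> assumption
  · intro l hl₁ hl₂
    obtain rfl : l = 1 := by omega
    exact hab

lemma trans (hab : JoinedByShortestChain S a b) (hbc : JoinedByShortestChain S b c)
    (hb : b ∈ [[a, c]]) : JoinedByShortestChain S a c := by
  obtain ⟨ch₁, r₁, ⟨h₁0, h₁r, h₁S, h₁step⟩, h₁len⟩ := hab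
  obtain ⟨ch₂, r₂, ⟨h₂0, h₂r, h₂S, h₂step⟩, h₂len⟩ := hbc
  refine ⟨fun n => if n ≤ r₁ then ch₁ n else ch₂ (n - r₁), r₁ + r₂, ⟨?_, ?_, ?_, ?_⟩, ?_⟩
  · simp [h₁0]
  · rcases Nat.eq_zero_or_pos r₂ with rfl | hr₂
    · simp [h₁r, ← h₂0, h₂r]
    · simp [show ¬ r₁ + r₂ ≤ r₁ by omega, h₂r]
  · intro l hl
    dsimp only
    split_ifs with h
    exacts [h₁S l h, h₂S _ (by omega)]
  · intro l hl₁ hl₂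
    by_cases h : l ≤ r₁
    · simpa [h, show l - 1 ≤ r₁ by omega] using h₁step l hl₁ h
    · by_cases h' : l = r₁ + 1
      · subst h'
        simpa [h₁r, ← h₂0] using h₂step 1 le_rfl (by omega)
      · simpa [h, show ¬ l - 1 ≤ r₁ by omega, show l - 1 - r₁ = l - r₁ - 1 by omega]
          using h₂step (l - r₁) (by omega) (by omega)
  · push_cast
    rw [← lnorm_sub_add_lnorm_sub_of_mem_uIcc hb, ← h₁len, ← h₂len]

lemma symm (hab : JoinedByShortestChain S a b) : JoinedByShortestChain S b a := by
  obtain ⟨ch, r, ⟨h0, hr, hS, hstep⟩, hlen⟩ := hab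
  refine ⟨fun n => ch (r - n), r, ⟨by simpa using hr, by simpa using h0, ?_, ?_⟩, ?_⟩
  · exact fun l _ => hS _ (Nat.sub_le r l)
  · intro l hl₁ hl₂
    dsimp only
    rw [lnorm_sub_comm, show r - (l - 1) = r - l + 1 by omega]
    simpa using hstep (r - l + 1) (by omega) (by omega)
  · rw [hlen, lnorm_sub_comm]

lemma map {T : Set (ℤ × ℤ)} (f : ℤ × ℤ → ℤ × ℤ) (hf : ∀ x y, lnorm (f x - f y) = lnorm (x - y))
    (hST : MapsTo f S T) (hab : JoinedByShortestChain S a b) :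
    JoinedByShortestChain T (f a) (f b) := by
  obtain ⟨ch, r, ⟨h0, hr, hS, hstep⟩, hlen⟩ := hab
  refine ⟨f ∘ ch, r, ⟨by simp [h0], by simp [hr], fun l hl => hST (hS l hl), ?_⟩, by rw [hf, hlen]⟩
  intro l hl₁ hl₂
  rw [Function.comp_apply, Function.comp_apply, hf]
  exact hstep l hl₁ hl₂

lemma refl (ha : a ∈ S) : JoinedByShortestChain S a a :=
  ⟨fun _ => a, 0, ⟨rfl, rfl, fun _ _ => ha, fun l hl₁ hl₂ => by omega⟩, by simp [lnorm]⟩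

lemma of_uIcc_subset (h : [[a, b]] ⊆ S) : JoinedByShortestChain S a b := by
  obtain ⟨n, hn⟩ : ∃ n : ℕ, lnorm (b - a) = n :=
    ⟨(lnorm (b - a)).toNat, by rw [Int.toNat_of_nonneg (by unfold lnorm; positivity)]⟩
  induction n generalizing a with
  | zero =>
    obtain rfl : a = b := by
      simp only [lnorm, Prod.fst_sub, Prod.snd_sub, abs_eq_max_neg, CharP.cast_eq_zero] at hn
      exact Prod.ext (by omega) (by omega)
    exact refl (h left_mem_uIcc)
  | succ n ih =>
    have hab : a ≠ b := by
      rintro rfl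
      simp only [sub_self, lnorm, Prod.fst_zero, Prod.snd_zero, abs_zero] at hn
      omega
    obtain ⟨a', ha', hstep, hrest⟩ := exists_step_mem_uIcc hab
    have ha'b : [[a', b]] ⊆ S := (uIcc_subset_uIcc_right ha').trans h
    exact (of_lnorm_sub_eq_one (h left_mem_uIcc) (ha'b left_mem_uIcc) hstep).trans
      (ih ha'b (by omega)) ha'

end JoinedByShortestChain

lemma uIcc_swap (a b : ℤ × ℤ) : [[a.swap, b.swap]] = Prod.swap ⁻¹' [[a, b]] := by
  ext r
  simp only [mem_uIcc_prod, mem_preimage, Prod.fst_swap, Prod.snd_swap, and_comm]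

def LPathIn (S : Set (ℤ × ℤ)) (a b : ℤ × ℤ) : Prop :=
  ∃ c, (c = (b.1, a.2) ∨ c = (a.1, b.2)) ∧ [[a, c]] ∪ [[c, b]] ⊆ S

lemma exists_corner_uIcc_union_subset {i c j q t : ℤ × ℤ} (hc : c = (j.1, i.2) ∨ c = (i.1, j.2))
    (hq : q ∈ [[i, c]] ∪ [[c, j]]) (ht : t ∈ [[i, c]] ∪ [[c, j]]) :
    ∃ c', (c' = (t.1, q.2) ∨ c' = (q.1, t.2)) ∧ [[q, c']] ∪ [[c', t]] ⊆ [[i, c]] ∪ [[c, j]] := by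
  have hseg : ∀ {a b : ℤ × ℤ}, q ∈ [[a, b]] → t ∈ [[a, b]] →
      [[q, t]] ∪ [[t, t]] ⊆ [[a, b]] := fun hq ht =>
    union_subset (uIcc_subset_uIcc hq ht) (uIcc_subset_uIcc ht ht)
  rcases hq with hq | hq <;> rcases ht with ht | ht
  · refine ⟨t, ?_, (hseg hq ht).trans subset_union_left⟩
    rcases hc with rfl | rfl <;>
      simp only [mem_uIcc_prod, mem_uIcc, Prod.ext_iff, true_and, and_true] at hq ht ⊢ <;> omega
  · refine ⟨c, ?_, union_subset_union (uIcc_subset_uIcc_right hq) (uIcc_subset_uIcc_left ht)⟩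
    rcases hc with rfl | rfl <;>
      simp only [mem_uIcc_prod, mem_uIcc, Prod.ext_iff] at hq ht ⊢ <;> omega
  · refine ⟨c, ?_, ?_⟩
    · rcases hc with rfl | rfl <;>
        simp only [mem_uIcc_prod, mem_uIcc, Prod.ext_iff] at hq ht ⊢ <;> omega
    · rw [union_comm]
      exact union_subset_union (uIcc_subset_uIcc right_mem_uIcc ht)
        (uIcc_subset_uIcc hq left_mem_uIcc)
  · refine ⟨t, ?_, (hseg hq ht).trans subset_union_right⟩
    rcases hc with rfl | rfl <;>
      simp only [mem_uIcc_prod, mem_uIcc, Prod.ext_iff, true_and, and_true] at hq ht ⊢ <;> omega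

namespace LPathIn

variable {S : Set (ℤ × ℤ)} {a b : ℤ × ℤ}

lemma left_mem (h : LPathIn S a b) : a ∈ S := by
  obtain ⟨c, -, hS⟩ := h
  exact hS (Or.inl left_mem_uIcc)

lemma joinedByShortestChain (h : LPathIn S a b) : JoinedByShortestChain S a b := by
  obtain ⟨c, hc, hS⟩ := h
  refine (JoinedByShortestChain.of_uIcc_subset (subset_union_left.trans hS)).trans
    (JoinedByShortestChain.of_uIcc_subset (subset_union_right.trans hS)) ?_
  rcases hc with rfl | rfl <;> simp [mem_uIcc_prod]

lemma swap (h : LPathIn S a b) : LPathIn (Prod.swap ⁻¹' S) a.swap b.swap := by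
  obtain ⟨c, hc, hS⟩ := h
  refine ⟨c.swap, ?_, ?_⟩
  · rcases hc with rfl | rfl
    exacts [Or.inr rfl, Or.inl rfl]
  · rw [uIcc_swap, uIcc_swap, ← preimage_union]
    exact preimage_mono hS

end LPathIn

def AxisConvexOn (S B : Set (ℤ × ℤ)) : Prop :=
  ∀ ⦃a⦄, a ∈ S ∩ B → ∀ ⦃b⦄, b ∈ S ∩ B → (a.1 = b.1 ∨ a.2 = b.2) → [[a, b]] ⊆ S

lemma AxisFilling.axisConvexOn {S A : Set (ℤ × ℤ)} (h : AxisFilling S A) : AxisConvexOn S A := by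
  intro a ha b hb hab r hr
  by_cases hra : r = a
  · exact hra ▸ ha.1
  by_cases hrb : r = b
  · exact hrb ▸ hb.1
  simp only [mem_uIcc_prod, mem_uIcc] at hr
  simp only [Prod.ext_iff] at hra hrb
  rcases hab with hab | hab
  · refine h a b ha.1 ha.2 hb.1 hb.2 0 hab r (show r.1 = a.1 by omega) ?_
    rw [Fin.forall_fin_two]
    exact ⟨fun h0 => (h0 rfl).elim, fun _ => show min a.2 b.2 < r.2 ∧ r.2 < max a.2 b.2 by omega⟩
  · refine h a b ha.1 ha.2 hb.1 hb.2 1 hab r (show r.2 = a.2 by omega) ?_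
    rw [Fin.forall_fin_two]
    exact ⟨fun _ => show min a.1 b.1 < r.1 ∧ r.1 < max a.1 b.1 by omega, fun h1 => (h1 rfl).elim⟩

namespace AxisConvexOn

variable {S B : Set (ℤ × ℤ)}

lemma swap (h : AxisConvexOn S B) : AxisConvexOn (Prod.swap ⁻¹' S) (Prod.swap ⁻¹' B) := by
  intro a ha b hb hab
  rw [← Prod.swap_swap a, ← Prod.swap_swap b, uIcc_swap]
  exact preimage_mono (h ha hb hab.symm)

lemma lPathIn {q q' c : ℤ × ℤ} (h : AxisConvexOn S B) (hB : [[q, q']] ⊆ B) (hq : q ∈ S)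
    (hq' : q' ∈ S) (hc : c = (q'.1, q.2) ∨ c = (q.1, q'.2)) (hcS : c ∈ S) : LPathIn S q q' := by
  have hcB : c ∈ B := hB (by rcases hc with rfl | rfl <;> simp [mem_uIcc_prod])
  refine ⟨c, hc, union_subset ?_ ?_⟩
  · exact h ⟨hq, hB left_mem_uIcc⟩ ⟨hcS, hcB⟩ (by rcases hc with rfl | rfl <;> simp)
  · exact h ⟨hcS, hcB⟩ ⟨hq', hB right_mem_uIcc⟩ (by rcases hc with rfl | rfl <;> simp)

end AxisConvexOn

lemma DirChainExists.uIcc_subset {S : Set (ℤ × ℤ)} {k : Fin 2} {a b : ℤ × ℤ}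
    (hab : ∀ k' ≠ k, coord2 a k' = coord2 b k') (ha : a ∈ S) (hb : b ∈ S)
    (h : DirChainExists S k a b) : [[a, b]] ⊆ S := by
  intro r hr
  by_cases hra : r = a
  · exact hra ▸ ha
  by_cases hrb : r = b
  · exact hrb ▸ hb
  simp only [mem_uIcc_prod, mem_uIcc] at hr
  simp only [Prod.ext_iff] at hra hrb
  rw [Fin.forall_fin_two] at hab
  fin_cases k
  · have hab₂ : a.2 = b.2 := hab.2 one_ne_zero
    refine h r ?_ (show min a.1 b.1 < r.1 by omega) (show r.1 < max a.1 b.1 by omega)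
    rw [Fin.forall_fin_two]
    exact ⟨fun h0 => (h0 rfl).elim, fun _ => show r.2 = a.2 by omega⟩
  · have hab₁ : a.1 = b.1 := hab.1 zero_ne_one
    refine h r ?_ (show min a.2 b.2 < r.2 by omega) (show r.2 < max a.2 b.2 by omega)
    rw [Fin.forall_fin_two]
    exact ⟨fun _ => show r.1 = a.1 by omega, fun h1 => (h1 rfl).elim⟩

lemma OnSegment.mem_uIcc {k : Fin 2} {a b t : ℤ × ℤ} (hab : ∀ k' ≠ k, coord2 a k' = coord2 b k')
    (h : OnSegment k a b t) : t ∈ [[a, b]] := by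
  obtain ⟨ht, hmin, hmax⟩ := h
  rw [Fin.forall_fin_two] at hab ht
  rw [mem_uIcc_prod, Set.mem_uIcc, Set.mem_uIcc]
  fin_cases k
  · have hab₂ : a.2 = b.2 := hab.2 one_ne_zero
    have ht₂ : t.2 = a.2 := ht.2 one_ne_zero
    change min a.1 b.1 ≤ t.1 at hmin
    change t.1 ≤ max a.1 b.1 at hmax
    omega
  · have hab₁ : a.1 = b.1 := hab.1 zero_ne_one
    have ht₁ : t.1 = a.1 := ht.1 zero_ne_one
    change min a.2 b.2 ≤ t.2 at hmin
    change t.2 ≤ max a.2 b.2 at hmax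
    omega

namespace IsLChain

variable {S : Set (ℤ × ℤ)} {i c j : ℤ × ℤ} {k₁ k₂ : Fin 2}

lemma corner_eq (h : IsLChain S i c j k₁ k₂) : c = (j.1, i.2) ∨ c = (i.1, j.2) := by
  obtain ⟨hk, -, -, -, hic, -, hcj, -⟩ := h
  obtain ⟨rfl, rfl⟩ | ⟨rfl, rfl⟩ : (k₁ = 0 ∧ k₂ = 1) ∨ (k₁ = 1 ∧ k₂ = 0) := by
    fin_cases k₁ <;> fin_cases k₂ <;> simp_all
  · exact Or.inl (Prod.ext (hcj 0 zero_ne_one) (hic 1 one_ne_zero).symm)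
  · exact Or.inr (Prod.ext (hic 0 zero_ne_one).symm (hcj 1 one_ne_zero))

lemma uIcc_union_subset (h : IsLChain S i c j k₁ k₂) : [[i, c]] ∪ [[c, j]] ⊆ S := by
  obtain ⟨-, hi, hc, hj, hic, hd₁, hcj, hd₂⟩ := h
  exact union_subset (hd₁.uIcc_subset hic hi hc) (hd₂.uIcc_subset hcj hc hj)

lemma mem_uIcc_union {q : ℤ × ℤ} (h : IsLChain S i c j k₁ k₂) (hq : InLChain i c j k₁ k₂ q) :
    q ∈ [[i, c]] ∪ [[c, j]] := by
  obtain ⟨-, -, -, -, hic, -, hcj, -⟩ := h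
  exact hq.imp (OnSegment.mem_uIcc hic) (OnSegment.mem_uIcc hcj)

lemma inLChain_right (h : IsLChain S i c j k₁ k₂) : InLChain i c j k₁ k₂ j := by
  obtain ⟨-, -, -, -, -, -, hcj, -⟩ := h
  exact Or.inr ⟨fun k' hk' => (hcj k' hk').symm, min_le_right _ _, le_max_right _ _⟩

lemma lPathIn {q t : ℤ × ℤ} (h : IsLChain S i c j k₁ k₂) (hq : InLChain i c j k₁ k₂ q)
    (ht : InLChain i c j k₁ k₂ t) : LPathIn S q t := by
  obtain ⟨c', hc', hsub⟩ :=
    exists_corner_uIcc_union_subset h.corner_eq (h.mem_uIcc_union hq) (h.mem_uIcc_union ht)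
  exact ⟨c', hc', hsub.trans h.uIcc_union_subset⟩

end IsLChain

section Staircase

variable {S B : Set (ℤ × ℤ)} {q q' t : ℤ × ℤ}

open JoinedByShortestChain in
lemma joinedByShortestChain_of_fst_mem_uIcc (hS : AxisConvexOn S B) (hqq' : [[q, q']] ⊆ B)
    (hqt : [[q, t]] ⊆ B) (hP : LPathIn S q t) (hq' : q' ∈ S) (hx : q'.1 ∈ [[q.1, t.1]]) :
    JoinedByShortestChain S q q' := by
  have hq := hP.left_mem
  obtain ⟨c, rfl | rfl, hP⟩ := hP
  · refine (hS.lPathIn hqq' hq hq' (Or.inl rfl) (hP (Or.inl ?_))).joinedByShortestChain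
    simp [mem_uIcc_prod, hx]
  -- `P` runs along the column of `q` to `(q.1, t.2)`, then along row `t.2`, meeting column `q'.1`
  set m : ℤ × ℤ := (q'.1, t.2)
  have hm : m ∈ [[(q.1, t.2), t]] := by simp [mem_uIcc_prod, m, hx]
  have hmS : m ∈ S := hP (Or.inr hm)
  have hmB : m ∈ B := hqt (by simp [mem_uIcc_prod, m, hx])
  have hmq' : [[m, q']] ⊆ S := hS ⟨hmS, hmB⟩ ⟨hq', hqq' right_mem_uIcc⟩ (Or.inl rfl)
  by_cases hv : t.2 ∈ [[q.2, q'.2]]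
  · refine (of_uIcc_subset (subset_union_left.trans hP)).trans
      ((of_uIcc_subset ((uIcc_subset_uIcc_left hm).trans (subset_union_right.trans hP))).trans
        (of_uIcc_subset hmq') (mem_uIcc_prod.2 ⟨right_mem_uIcc, left_mem_uIcc⟩))
      (mem_uIcc_prod.2 ⟨left_mem_uIcc, hv⟩)
  -- otherwise a corner of `[[q, q']]` lies on the column of `q` or on `[[m, q']]`
  obtain hy | hy : q'.2 ∈ [[q.2, t.2]] ∨ q.2 ∈ [[q'.2, t.2]] := by
    simp only [mem_uIcc] at hv ⊢
    omega
  · refine (hS.lPathIn hqq' hq hq' (Or.inr rfl) (hP (Or.inl ?_))).joinedByShortestChain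
    simp [mem_uIcc_prod, hy]
  · refine (hS.lPathIn hqq' hq hq' (Or.inl rfl) (hmq' ?_)).joinedByShortestChain
    exact mem_uIcc_prod.2 ⟨left_mem_uIcc, by rwa [uIcc_comm]⟩

lemma joinedByShortestChain_of_snd_mem_uIcc (hS : AxisConvexOn S B) (hqq' : [[q, q']] ⊆ B)
    (hqt : [[q, t]] ⊆ B) (hP : LPathIn S q t) (hq' : q' ∈ S) (hy : q'.2 ∈ [[q.2, t.2]]) :
    JoinedByShortestChain S q q' := by
  have h := joinedByShortestChain_of_fst_mem_uIcc (q' := q'.swap) hS.swap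
    (by rw [uIcc_swap]; exact preimage_mono hqq') (by rw [uIcc_swap]; exact preimage_mono hqt)
    hP.swap hq' hy
  simpa only [Prod.swap_swap] using
    h.map (T := S) Prod.swap (fun x y => add_comm _ _) (fun _ hx => hx)

theorem joinedByShortestChain_of_lPathIn_of_lPathIn (hS : AxisConvexOn S B)
    (hqq' : [[q, q']] ⊆ B) (hqt : [[q, t]] ⊆ B) (hq't : [[q', t]] ⊆ B) (hP : LPathIn S q t)
    (hP' : LPathIn S q' t) : JoinedByShortestChain S q q' := by
  have hq'q : [[q', q]] ⊆ B := uIcc_comm q q' ▸ hqq'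
  by_cases hx : q'.1 ∈ [[q.1, t.1]]
  · exact joinedByShortestChain_of_fst_mem_uIcc hS hqq' hqt hP hP'.left_mem hx
  by_cases hx' : q.1 ∈ [[q'.1, t.1]]
  · exact (joinedByShortestChain_of_fst_mem_uIcc hS hq'q hq't hP' hP.left_mem hx').symm
  by_cases hy : q'.2 ∈ [[q.2, t.2]]
  · exact joinedByShortestChain_of_snd_mem_uIcc hS hqq' hqt hP hP'.left_mem hy
  by_cases hy' : q.2 ∈ [[q'.2, t.2]]
  · exact (joinedByShortestChain_of_snd_mem_uIcc hS hq'q hq't hP' hP.left_mem hy').symm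
  refine hP.joinedByShortestChain.trans hP'.joinedByShortestChain.symm ?_
  simp only [mem_uIcc_prod, mem_uIcc] at hx hx' hy hy' ⊢
  omega

end Staircase

lemma uIcc_subset_interBox {p₁ p₂ : ℕ} {i j a b : ℤ × ℤ} (ha : a ∈ interBox p₁ p₂ i j)
    (hb : b ∈ interBox p₁ p₂ i j) : [[a, b]] ⊆ interBox p₁ p₂ i j := by
  intro r hr
  simp only [interBox, mem_ofPred_eq, abs_le] at ha hb ⊢
  simp only [mem_uIcc_prod, mem_uIcc] at hr
  omega

/-- Let `C_{i,j}` be an L-chain in `S` between `i` and `j`, let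
`t ∈ C_{i,j}`, and let `C_{l,t}` be an L-chain in `S` between `l` and `t`.
If `q ∈ C_{i,j}` and `q' ∈ C_{l,t}` satisfy `|q_k - q'_k| ≤ p_k + 1`,
`|q_k - t_k| ≤ p_k + 1` and `|q'_k - t_k| ≤ p_k + 1` for `k = 1, 2`, and `S`
is axis-filling on `B(q,q')`, then there is a shortest chain in `S` between
`q` and `q'`. -/
theorem no_problematic_pairs_between_lchains (S : Set (ℤ × ℤ)) (p₁ p₂ : ℕ)
    (i c₁ j l c₂ t q q' : ℤ × ℤ) (k₁ k₂ m₁ m₂ : Fin 2)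
    (h1 : IsLChain S i c₁ j k₁ k₂) (ht : InLChain i c₁ j k₁ k₂ t)
    (h2 : IsLChain S l c₂ t m₁ m₂)
    (hq : InLChain i c₁ j k₁ k₂ q) (hq' : InLChain l c₂ t m₁ m₂ q')
    (hqq'1 : |q.1 - q'.1| ≤ (p₁ : ℤ) + 1) (hqq'2 : |q.2 - q'.2| ≤ (p₂ : ℤ) + 1)
    (hqt1 : |q.1 - t.1| ≤ (p₁ : ℤ) + 1) (hqt2 : |q.2 - t.2| ≤ (p₂ : ℤ) + 1)
    (hq't1 : |q'.1 - t.1| ≤ (p₁ : ℤ) + 1) (hq't2 : |q'.2 - t.2| ≤ (p₂ : ℤ) + 1)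
    (haf : AxisFilling S (interBox p₁ p₂ q q')) :
    ∃ (ch : ℕ → ℤ × ℤ) (r : ℕ), ShortestChainIn S ch r q q' := by
  have hself (x : ℤ) (p : ℕ) : |x - x| ≤ (p : ℤ) + 1 := by rw [sub_self, abs_zero]; positivity
  have hqB : q ∈ interBox p₁ p₂ q q' :=
    ⟨hself _ _, hself _ _, by rwa [abs_sub_comm], by rwa [abs_sub_comm]⟩
  have hq'B : q' ∈ interBox p₁ p₂ q q' := ⟨hqq'1, hqq'2, hself _ _, hself _ _⟩
  have htB : t ∈ interBox p₁ p₂ q q' := ⟨hqt1, hqt2, hq't1, hq't2⟩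
  exact joinedByShortestChain_of_lPathIn_of_lPathIn haf.axisConvexOn
    (uIcc_subset_interBox hqB hq'B) (uIcc_subset_interBox hqB htB)
    (uIcc_subset_interBox hq'B htB) (h1.lPathIn hq ht) (h2.lPathIn hq' h2.inLChain_right)
end
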